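/- (Conductor-based policy improvement inequality) Let a finite discounted MDP with initial distribution d₀ be given, let K ≥ 1, and let (w, π) and (w̄, π̄) be two conductor-based policies in which all conditional probability mass functions w(s,·), w̄(s,·), π_j(s,·), π̄_j(s,·) are strictly positive. Let μ and μ̄ be the induced joint policies, i.e. μ(s,a) = ∑_{j} w(s,j) · π_j(s,a) and μ̄(s,a) = ∑_{j} w̄(s,j) · π̄_j(s,a). Set C := 4 γ (max_{s,a} |A_μ(s,a)|) / (1 − γ)². Then J(μ̄) ≥ J(μ) + ∑_{s} ρ_μ(s) · [ ∑_{j} w̄(s,j) · A_μ(j | s) − C · max_{s'} D_KL(w(s',·), w̄(s',·)) + ∑_{j} w̄(s,j) ∑_{a} π̄_j(s,a) · A_μ(a | s, j) − C · max_{s'} ∑_{j} w(s',j) · D_KL(π_j(s',·), π̄_j(s',·)) ]. -/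

import Mathlib

/-!
By the performance-difference identity, `J(μb) - J(μ)` is the discounted sum over `t` of the
expectation, under `d^{μb}_t`, of the expected advantage `Ā(s) = ∑_a μb(s,a) A_μ(s,a)`; the
surrogate `∑_s ρ_μ(s) Ā(s)` is the same sum under `d^μ_t`. Since `∑_a μ(s,a) A_μ(s,a) = 0`, we have
`|Ā(s)| ≤ ε α`, where `ε = max |A_μ|` and `α = max_s ‖μb(s,·) - μ(s,·)‖₁`, and after `t` steps the
two state distributions are at most `α t` apart in `ℓ¹`. The error is therefore at most
`∑_t γ^t t ε α² = γ ε α² / (1-γ)²`. Pinsker's inequality gives `α² ≤ 4 max_s KL(μ(s), μb(s))`,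
and the log-sum inequality bounds the divergence of the two mixtures by
`KL(w(s), wb(s)) + ∑_j w(s,j) KL(π_j(s), πb_j(s))`. Finally `Ā(s)` splits into the instruction
advantage plus the conditional action advantage, and weighting the penalty by
`∑_s ρ_μ(s) = 1/(1-γ) ≥ 1` only weakens the bound.
-/

open Finset

noncomputable section

variable {S 𝒜 : Type*}

def KL {X : Type*} [Fintype X] (p q : X → ℝ) : ℝ :=
  ∑ x, p x * Real.log (p x / q x)

def dseq [Fintype S] [Fintype 𝒜] (P : S → 𝒜 → S → ℝ) (μ : S → 𝒜 → ℝ)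
    (d₀ : S → ℝ) : ℕ → S → ℝ
  | 0 => d₀
  | t + 1 => fun s' => ∑ s, ∑ a, dseq P μ d₀ t s * μ s a * P s a s'

def Jret [Fintype S] [Fintype 𝒜] (P : S → 𝒜 → S → ℝ) (r : S → 𝒜 → ℝ) (γ : ℝ)
    (μ : S → 𝒜 → ℝ) (d₀ : S → ℝ) : ℝ :=
  ∑' t : ℕ, γ ^ t * ∑ s, ∑ a, dseq P μ d₀ t s * μ s a * r s a

def Vfun [Fintype S] [Fintype 𝒜] [DecidableEq S] (P : S → 𝒜 → S → ℝ)
    (r : S → 𝒜 → ℝ) (γ : ℝ) (μ : S → 𝒜 → ℝ) (s : S) : ℝ :=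
  Jret P r γ μ (fun s' => if s' = s then 1 else 0)

def Qfun [Fintype S] [Fintype 𝒜] [DecidableEq S] (P : S → 𝒜 → S → ℝ)
    (r : S → 𝒜 → ℝ) (γ : ℝ) (μ : S → 𝒜 → ℝ) (s : S) (a : 𝒜) : ℝ :=
  r s a + γ * ∑ s', P s a s' * Vfun P r γ μ s'

def Adv [Fintype S] [Fintype 𝒜] [DecidableEq S] (P : S → 𝒜 → S → ℝ)
    (r : S → 𝒜 → ℝ) (γ : ℝ) (μ : S → 𝒜 → ℝ) (s : S) (a : 𝒜) : ℝ :=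
  Qfun P r γ μ s a - Vfun P r γ μ s

def rho [Fintype S] [Fintype 𝒜] (P : S → 𝒜 → S → ℝ) (μ : S → 𝒜 → ℝ)
    (d₀ : S → ℝ) (γ : ℝ) (s : S) : ℝ :=
  ∑' t : ℕ, γ ^ t * dseq P μ d₀ t s

theorem sq_sqrt_sub_sqrt_le_mul_log_div_sub_add {a b : ℝ} (ha : 0 < a) (hb : 0 < b) :
    (√a - √b) ^ 2 ≤ a * Real.log (a / b) - a + b := by
  have hx : 0 < √a := Real.sqrt_pos.2 ha
  have hy : 0 < √b := Real.sqrt_pos.2 hb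
  have hlog : Real.log (a / b) = 2 * Real.log (√a / √b) := by
    have hratio : a / b = (√a / √b) ^ 2 := by
      rw [div_pow, Real.sq_sqrt ha.le, Real.sq_sqrt hb.le]
    rw [hratio, Real.log_pow, Nat.cast_ofNat]
  have h := Real.one_sub_inv_le_log_of_pos (div_pos hx hy)
  rw [inv_div] at h
  calc (√a - √b) ^ 2 = a * (2 * (1 - √b / √a)) - a + b := by
        field_simp
        linear_combination (√a - 2 * √b) * Real.mul_self_sqrt ha.le + √a * Real.mul_self_sqrt hb.le
    _ ≤ a * Real.log (a / b) - a + b := by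
        rw [hlog]; gcongr

theorem sq_sub_le_two_mul_add_mul_log_div_sub_add {a b : ℝ} (ha : 0 < a) (hb : 0 < b) :
    (a - b) ^ 2 ≤ 2 * (a + b) * (a * Real.log (a / b) - a + b) := by
  calc (a - b) ^ 2 = (√a + √b) ^ 2 * (√a - √b) ^ 2 := by
        linear_combination (b - a - (√a * √a - √b * √b)) * Real.mul_self_sqrt ha.le
          - (b - a - (√a * √a - √b * √b)) * Real.mul_self_sqrt hb.le
    _ ≤ 2 * (a + b) * (√a - √b) ^ 2 := by
        gcongr
        nlinarith [sq_nonneg (√a - √b), Real.sq_sqrt ha.le, Real.sq_sqrt hb.le]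
    _ ≤ 2 * (a + b) * (a * Real.log (a / b) - a + b) := by
        gcongr; exact sq_sqrt_sub_sqrt_le_mul_log_div_sub_add ha hb

theorem sq_sum_abs_sub_le_four_mul_KL {X : Type*} [Fintype X] {p q : X → ℝ}
    (hp : ∀ x, 0 < p x) (hq : ∀ x, 0 < q x) (hp1 : ∑ x, p x = 1) (hq1 : ∑ x, q x = 1) :
    (∑ x, |p x - q x|) ^ 2 ≤ 4 * KL p q := by
  have hweights : ∑ x, 2 * (p x + q x) = 4 := by
    rw [← mul_sum, sum_add_distrib, hp1, hq1]; norm_num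
  have hKL : ∑ x, (p x * Real.log (p x / q x) - p x + q x) = KL p q := by
    rw [sum_add_distrib, sum_sub_distrib, hp1, hq1, KL, sub_add_cancel]
  calc (∑ x, |p x - q x|) ^ 2
      ≤ (∑ x, 2 * (p x + q x)) * ∑ x, (p x * Real.log (p x / q x) - p x + q x) :=
        sum_sq_le_sum_mul_sum_of_sq_le_mul _
          (fun x _ => by linarith [hp x, hq x])
          (fun x _ => (sq_nonneg _).trans (sq_sqrt_sub_sqrt_le_mul_log_div_sub_add (hp x) (hq x)))
          (fun x _ => by rw [sq_abs]; exact sq_sub_le_two_mul_add_mul_log_div_sub_add (hp x) (hq x))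
    _ = 4 * KL p q := by rw [hweights, hKL]

theorem sum_mul_log_sum_div_sum_le {ι : Type*} (s : Finset ι) {p q : ι → ℝ}
    (hp : ∀ i ∈ s, 0 < p i) (hq : ∀ i ∈ s, 0 < q i) :
    (∑ i ∈ s, p i) * Real.log ((∑ i ∈ s, p i) / ∑ i ∈ s, q i) ≤
      ∑ i ∈ s, p i * Real.log (p i / q i) := by
  rcases s.eq_empty_or_nonempty with rfl | hs
  · simp
  set P := ∑ i ∈ s, p i
  set Q := ∑ i ∈ s, q i
  have hP : 0 < P := sum_pos hp hs
  have hQ : 0 < Q := sum_pos hq hs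
  have key : ∀ i ∈ s,
      p i * Real.log (P / Q) - p i * Real.log (p i / q i) ≤ q i * (P / Q) - p i := by
    intro i hi
    have hpi := hp i hi
    have hqi := hq i hi
    have h := Real.log_le_sub_one_of_pos (show 0 < (P / Q) / (p i / q i) by positivity)
    rw [Real.log_div (by positivity) (by positivity)] at h
    calc p i * Real.log (P / Q) - p i * Real.log (p i / q i)
        = p i * (Real.log (P / Q) - Real.log (p i / q i)) := by ring
      _ ≤ p i * ((P / Q) / (p i / q i) - 1) := mul_le_mul_of_nonneg_left h hpi.le
      _ = q i * (P / Q) - p i := by field_simp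
  have hsum := sum_le_sum key
  rw [sum_sub_distrib, sum_sub_distrib, ← sum_mul, ← sum_mul, mul_div_cancel₀ _ hQ.ne'] at hsum
  linarith

theorem sum_mixture_eq_one {ι X : Type*} [Fintype ι] [Fintype X] {w : ι → ℝ} {π : ι → X → ℝ}
    (hw1 : ∑ j, w j = 1) (hπ1 : ∀ j, ∑ x, π j x = 1) : ∑ x, ∑ j, w j * π j x = 1 := by
  rw [sum_comm]
  simp only [← mul_sum, hπ1, mul_one, hw1]

theorem KL_mixture_le {ι X : Type*} [Fintype ι] [Fintype X] {w wb : ι → ℝ} {π πb : ι → X → ℝ}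
    (hw : ∀ j, 0 < w j) (hwb : ∀ j, 0 < wb j) (hπ : ∀ j x, 0 < π j x) (hπb : ∀ j x, 0 < πb j x)
    (hπ1 : ∀ j, ∑ x, π j x = 1) :
    KL (fun x => ∑ j, w j * π j x) (fun x => ∑ j, wb j * πb j x) ≤
      KL w wb + ∑ j, w j * KL (π j) (πb j) := by
  have hsplit : ∀ j x, w j * π j x * Real.log (w j * π j x / (wb j * πb j x)) =
      w j * Real.log (w j / wb j) * π j x + w j * (π j x * Real.log (π j x / πb j x)) := by
    intro j x
    rw [mul_div_mul_comm,
      Real.log_mul (div_pos (hw j) (hwb j)).ne' (div_pos (hπ j x) (hπb j x)).ne']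
    ring
  calc KL (fun x => ∑ j, w j * π j x) (fun x => ∑ j, wb j * πb j x)
      ≤ ∑ x, ∑ j, w j * π j x * Real.log (w j * π j x / (wb j * πb j x)) :=
        sum_le_sum fun x _ => sum_mul_log_sum_div_sum_le _
          (fun j _ => mul_pos (hw j) (hπ j x)) (fun j _ => mul_pos (hwb j) (hπb j x))
    _ = ∑ j, (w j * Real.log (w j / wb j) + w j * KL (π j) (πb j)) := by
        rw [sum_comm]
        refine sum_congr rfl fun j _ => ?_
        simp only [hsplit, sum_add_distrib, ← mul_sum, hπ1, mul_one, KL]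
    _ = KL w wb + ∑ j, w j * KL (π j) (πb j) := sum_add_distrib

section MarkovChain

variable [Fintype S] [Fintype 𝒜] {P : S → 𝒜 → S → ℝ} {μ ν : S → 𝒜 → ℝ} {d : S → ℝ}

def nextDist (P : S → 𝒜 → S → ℝ) (μ : S → 𝒜 → ℝ) (d : S → ℝ) (s' : S) : ℝ :=
  ∑ s, ∑ a, d s * μ s a * P s a s'

theorem dseq_succ (P : S → 𝒜 → S → ℝ) (μ : S → 𝒜 → ℝ) (d : S → ℝ) (t : ℕ) :
    dseq P μ d (t + 1) = nextDist P μ (dseq P μ d t) := rfl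

theorem dseq_succ_eq_dseq_nextDist (P : S → 𝒜 → S → ℝ) (μ : S → 𝒜 → ℝ) (d : S → ℝ) (t : ℕ) :
    dseq P μ d (t + 1) = dseq P μ (nextDist P μ d) t := by
  induction t with
  | zero => rfl
  | succ t ih => rw [dseq_succ, ih, dseq_succ]

theorem sum_nextDist_mul (f : S → ℝ) :
    ∑ s', nextDist P μ d s' * f s' = ∑ s, d s * ∑ a, μ s a * ∑ s', P s a s' * f s' := by
  simp only [nextDist, sum_mul, mul_sum]
  rw [sum_comm]
  refine sum_congr rfl fun s _ => ?_
  rw [sum_comm]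
  exact sum_congr rfl fun a _ => sum_congr rfl fun s' _ => by ring

theorem sum_sum_sum_mul_eq_sum_sum (hP1 : ∀ s a, ∑ s', P s a s' = 1) (g : S → 𝒜 → ℝ) :
    ∑ s', ∑ s, ∑ a, g s a * P s a s' = ∑ s, ∑ a, g s a := by
  rw [sum_comm]
  refine sum_congr rfl fun s _ => ?_
  rw [sum_comm]
  simp only [← mul_sum, hP1, mul_one]

theorem nextDist_mem_stdSimplex (hP : ∀ s a, P s a ∈ stdSimplex ℝ S)
    (hμ : ∀ s, μ s ∈ stdSimplex ℝ 𝒜) (hd : d ∈ stdSimplex ℝ S) :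
    nextDist P μ d ∈ stdSimplex ℝ S := by
  refine ⟨fun s' => sum_nonneg fun s _ => sum_nonneg fun a _ => ?_, ?_⟩
  · exact mul_nonneg (mul_nonneg (hd.1 s) ((hμ s).1 a)) ((hP s a).1 s')
  · unfold nextDist
    rw [sum_sum_sum_mul_eq_sum_sum fun s a => (hP s a).2]
    simp only [← mul_sum, (hμ _).2, mul_one, hd.2]

theorem dseq_mem_stdSimplex (hP : ∀ s a, P s a ∈ stdSimplex ℝ S)
    (hμ : ∀ s, μ s ∈ stdSimplex ℝ 𝒜) (hd : d ∈ stdSimplex ℝ S) (t : ℕ) :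
    dseq P μ d t ∈ stdSimplex ℝ S := by
  induction t with
  | zero => exact hd
  | succ t ih => exact nextDist_mem_stdSimplex hP hμ ih

theorem sum_abs_nextDist_sub_le (hP : ∀ s a, P s a ∈ stdSimplex ℝ S)
    (hν : ∀ s, ν s ∈ stdSimplex ℝ 𝒜) {d d' : S → ℝ} (hd' : ∀ s, 0 ≤ d' s) :
    ∑ s', |nextDist P ν d s' - nextDist P μ d' s'| ≤
      ∑ s, |d s - d' s| + ∑ s, d' s * ∑ a, |ν s a - μ s a| := by
  calc ∑ s', |nextDist P ν d s' - nextDist P μ d' s'|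
      ≤ ∑ s', ∑ s, ∑ a, (|d s - d' s| * ν s a + d' s * |ν s a - μ s a|) * P s a s' := by
        refine sum_le_sum fun s' _ => ?_
        simp only [nextDist, ← sum_sub_distrib]
        refine (abs_sum_le_sum_abs _ _).trans <| sum_le_sum fun s _ =>
          (abs_sum_le_sum_abs _ _).trans <| sum_le_sum fun a _ => ?_
        rw [show d s * ν s a * P s a s' - d' s * μ s a * P s a s' =
            ((d s - d' s) * ν s a + d' s * (ν s a - μ s a)) * P s a s' by ring,
          abs_mul, abs_of_nonneg ((hP s a).1 s')]
        refine mul_le_mul_of_nonneg_right ((abs_add_le _ _).trans_eq ?_) ((hP s a).1 s')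
        rw [abs_mul, abs_mul, abs_of_nonneg ((hν s).1 a), abs_of_nonneg (hd' s)]
    _ = ∑ s, (|d s - d' s| + d' s * ∑ a, |ν s a - μ s a|) := by
        rw [sum_sum_sum_mul_eq_sum_sum fun s a => (hP s a).2]
        simp only [sum_add_distrib, ← mul_sum, (hν _).2, mul_one]
    _ = _ := sum_add_distrib

theorem sum_abs_dseq_sub_le (hP : ∀ s a, P s a ∈ stdSimplex ℝ S)
    (hμ : ∀ s, μ s ∈ stdSimplex ℝ 𝒜) (hν : ∀ s, ν s ∈ stdSimplex ℝ 𝒜) (hd : d ∈ stdSimplex ℝ S)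
    {α : ℝ} (hα : ∀ s, ∑ a, |ν s a - μ s a| ≤ α) (t : ℕ) :
    ∑ s, |dseq P ν d t s - dseq P μ d t s| ≤ α * t := by
  induction t with
  | zero => simp [dseq]
  | succ t ih =>
    have hdist := dseq_mem_stdSimplex hP hμ hd t
    calc ∑ s, |dseq P ν d (t + 1) s - dseq P μ d (t + 1) s|
        ≤ ∑ s, |dseq P ν d t s - dseq P μ d t s| +
            ∑ s, dseq P μ d t s * ∑ a, |ν s a - μ s a| :=
          sum_abs_nextDist_sub_le hP hν hdist.1
      _ ≤ α * t + ∑ s, dseq P μ d t s * α := by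
          gcongr with s
          · exact hdist.1 s
          · exact hα s
      _ = α * ↑(t + 1) := by rw [← sum_mul, hdist.2]; push_cast; ring

end MarkovChain

section Discounted

variable [Fintype S] {γ : ℝ}

theorem summable_geometric_mul_apply (hγ0 : 0 ≤ γ) (hγ1 : γ < 1) {f : ℕ → S → ℝ}
    (hf : ∀ t, f t ∈ stdSimplex ℝ S) (s : S) : Summable fun t => γ ^ t * f t s :=
  (summable_geometric_of_lt_one hγ0 hγ1).of_nonneg_of_le
    (fun t => mul_nonneg (pow_nonneg hγ0 t) ((hf t).1 s))
    (fun t => mul_le_of_le_one_right (pow_nonneg hγ0 t) (mem_Icc_of_mem_stdSimplex (hf t) s).2)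

theorem summable_geometric_mul_sum_mul (hγ0 : 0 ≤ γ) (hγ1 : γ < 1) {f : ℕ → S → ℝ}
    (hf : ∀ t, f t ∈ stdSimplex ℝ S) (g : S → ℝ) :
    Summable fun t => γ ^ t * ∑ s, f t s * g s := by
  simp_rw [mul_sum, ← mul_assoc]
  exact summable_sum fun s _ => (summable_geometric_mul_apply hγ0 hγ1 hf s).mul_right (g s)

theorem tsum_geometric_mul_sum_mul (hγ0 : 0 ≤ γ) (hγ1 : γ < 1) {f : ℕ → S → ℝ}
    (hf : ∀ t, f t ∈ stdSimplex ℝ S) (g : S → ℝ) :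
    ∑' t, γ ^ t * ∑ s, f t s * g s = ∑ s, (∑' t, γ ^ t * f t s) * g s := by
  simp_rw [mul_sum, ← mul_assoc, ← tsum_mul_right]
  exact Summable.tsum_finsetSum fun s _ =>
    (summable_geometric_mul_apply hγ0 hγ1 hf s).mul_right _

end Discounted

section Values

variable [Fintype S] [Fintype 𝒜] {P : S → 𝒜 → S → ℝ} {r : S → 𝒜 → ℝ} {γ : ℝ}
  {μ : S → 𝒜 → ℝ} {d : S → ℝ}

theorem Jret_eq_tsum (P : S → 𝒜 → S → ℝ) (r : S → 𝒜 → ℝ) (γ : ℝ) (μ : S → 𝒜 → ℝ) (d : S → ℝ) :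
    Jret P r γ μ d = ∑' t, γ ^ t * ∑ s, dseq P μ d t s * ∑ a, μ s a * r s a := by
  simp only [Jret, mul_sum, mul_assoc]

theorem dirac_mem_stdSimplex [DecidableEq S] (s₀ : S) :
    (fun s => if s = s₀ then (1 : ℝ) else 0) ∈ stdSimplex ℝ S := by
  simpa only [eq_comm] using ite_eq_mem_stdSimplex ℝ s₀

theorem dseq_eq_sum_mul_dseq_dirac [DecidableEq S] (P : S → 𝒜 → S → ℝ) (μ : S → 𝒜 → ℝ)
    (d : S → ℝ) (t : ℕ) (s : S) :
    dseq P μ d t s = ∑ s₀, d s₀ * dseq P μ (fun s' => if s' = s₀ then 1 else 0) t s := by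
  induction t generalizing s with
  | zero => simp [dseq]
  | succ t ih =>
    simp only [dseq_succ, nextDist, ih, sum_mul, mul_sum]
    rw [sum_congr rfl fun x _ => sum_comm, sum_comm]
    exact sum_congr rfl fun s₀ _ => sum_congr rfl fun x _ => sum_congr rfl fun a _ => by ring

theorem tsum_dseq_mul_eq_sum_mul [DecidableEq S] (hγ0 : 0 ≤ γ) (hγ1 : γ < 1)
    (hP : ∀ s a, P s a ∈ stdSimplex ℝ S) (hμ : ∀ s, μ s ∈ stdSimplex ℝ 𝒜) (d g : S → ℝ) :
    ∑' t, γ ^ t * ∑ s, dseq P μ d t s * g s =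
      ∑ s₀, d s₀ * ∑' t, γ ^ t * ∑ s, dseq P μ (fun s' => if s' = s₀ then 1 else 0) t s * g s := by
  have hdecomp (t : ℕ) : dseq P μ d t =
      fun s => ∑ s₀, d s₀ * dseq P μ (fun s' => if s' = s₀ then 1 else 0) t s :=
    funext (dseq_eq_sum_mul_dseq_dirac P μ d t)
  have hsummable (s₀ : S) := summable_geometric_mul_sum_mul hγ0 hγ1
    (dseq_mem_stdSimplex hP hμ (dirac_mem_stdSimplex s₀)) g
  simp only [← tsum_mul_left]
  rw [← Summable.tsum_finsetSum fun s₀ _ => (hsummable s₀).mul_left (d s₀)]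
  refine tsum_congr fun t => ?_
  simp only [hdecomp, sum_mul, mul_sum]
  rw [sum_comm]
  exact sum_congr rfl fun s₀ _ => sum_congr rfl fun s _ => by ring

theorem Jret_eq_sum_mul_Vfun [DecidableEq S] (hγ0 : 0 ≤ γ) (hγ1 : γ < 1)
    (hP : ∀ s a, P s a ∈ stdSimplex ℝ S) (hμ : ∀ s, μ s ∈ stdSimplex ℝ 𝒜) (d : S → ℝ) :
    Jret P r γ μ d = ∑ s, d s * Vfun P r γ μ s := by
  simp only [Vfun, Jret_eq_tsum]
  exact tsum_dseq_mul_eq_sum_mul hγ0 hγ1 hP hμ d _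

theorem Jret_eq_add (hγ0 : 0 ≤ γ) (hγ1 : γ < 1) (hP : ∀ s a, P s a ∈ stdSimplex ℝ S)
    (hμ : ∀ s, μ s ∈ stdSimplex ℝ 𝒜) (hd : d ∈ stdSimplex ℝ S) :
    Jret P r γ μ d = ∑ s, d s * ∑ a, μ s a * r s a + γ * Jret P r γ μ (nextDist P μ d) := by
  rw [Jret_eq_tsum,
    (summable_geometric_mul_sum_mul hγ0 hγ1 (dseq_mem_stdSimplex hP hμ hd) _).tsum_eq_zero_add,
    Jret_eq_tsum, ← tsum_mul_left]
  simp only [dseq_succ_eq_dseq_nextDist, pow_succ, pow_zero, one_mul]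
  congr 1
  exact tsum_congr fun t => by ring

theorem Vfun_eq_sum_mul_Qfun [DecidableEq S] (hγ0 : 0 ≤ γ) (hγ1 : γ < 1)
    (hP : ∀ s a, P s a ∈ stdSimplex ℝ S) (hμ : ∀ s, μ s ∈ stdSimplex ℝ 𝒜) (s : S) :
    Vfun P r γ μ s = ∑ a, μ s a * Qfun P r γ μ s a := by
  rw [Vfun, Jret_eq_add hγ0 hγ1 hP hμ (dirac_mem_stdSimplex s), Jret_eq_sum_mul_Vfun hγ0 hγ1 hP hμ,
    sum_nextDist_mul]
  simp [Qfun, mul_add, sum_add_distrib, mul_sum, mul_left_comm]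

theorem sum_rho_mul (hγ0 : 0 ≤ γ) (hγ1 : γ < 1) (hP : ∀ s a, P s a ∈ stdSimplex ℝ S)
    (hμ : ∀ s, μ s ∈ stdSimplex ℝ 𝒜) (hd : d ∈ stdSimplex ℝ S) (g : S → ℝ) :
    ∑ s, rho P μ d γ s * g s = ∑' t, γ ^ t * ∑ s, dseq P μ d t s * g s :=
  (tsum_geometric_mul_sum_mul hγ0 hγ1 (dseq_mem_stdSimplex hP hμ hd) g).symm

theorem sum_rho (hγ0 : 0 ≤ γ) (hγ1 : γ < 1) (hP : ∀ s a, P s a ∈ stdSimplex ℝ S)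
    (hμ : ∀ s, μ s ∈ stdSimplex ℝ 𝒜) (hd : d ∈ stdSimplex ℝ S) :
    ∑ s, rho P μ d γ s = (1 - γ)⁻¹ := by
  simpa [(dseq_mem_stdSimplex hP hμ hd _).2, tsum_geometric_of_lt_one hγ0 hγ1]
    using sum_rho_mul hγ0 hγ1 hP hμ hd 1

end Values

section PolicyImprovement

variable [Fintype S] [Fintype 𝒜] [DecidableEq S] {P : S → 𝒜 → S → ℝ} {r : S → 𝒜 → ℝ}
  {γ : ℝ} {μ ν : S → 𝒜 → ℝ} {d : S → ℝ}

def expectedAdv (P : S → 𝒜 → S → ℝ) (r : S → 𝒜 → ℝ) (γ : ℝ) (μ ν : S → 𝒜 → ℝ) (s : S) : ℝ :=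
  ∑ a, ν s a * Adv P r γ μ s a

theorem expectedAdv_eq (hν : ∀ s, ν s ∈ stdSimplex ℝ 𝒜) (s : S) :
    expectedAdv P r γ μ ν s = ∑ a, ν s a * Qfun P r γ μ s a - Vfun P r γ μ s := by
  simp only [expectedAdv, Adv, mul_sub, sum_sub_distrib, ← sum_mul, (hν s).2, one_mul]

theorem expectedAdv_self (hγ0 : 0 ≤ γ) (hγ1 : γ < 1) (hP : ∀ s a, P s a ∈ stdSimplex ℝ S)
    (hμ : ∀ s, μ s ∈ stdSimplex ℝ 𝒜) (s : S) : expectedAdv P r γ μ μ s = 0 := by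
  rw [expectedAdv_eq hμ, Vfun_eq_sum_mul_Qfun hγ0 hγ1 hP hμ, sub_self]

theorem abs_expectedAdv_le (hγ0 : 0 ≤ γ) (hγ1 : γ < 1) (hP : ∀ s a, P s a ∈ stdSimplex ℝ S)
    (hμ : ∀ s, μ s ∈ stdSimplex ℝ 𝒜) {ε : ℝ} {s : S} (hε : ∀ a, |Adv P r γ μ s a| ≤ ε) :
    |expectedAdv P r γ μ ν s| ≤ ε * ∑ a, |ν s a - μ s a| := by
  calc |expectedAdv P r γ μ ν s|
      = |∑ a, (ν s a - μ s a) * Adv P r γ μ s a| := by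
        rw [← sub_zero (expectedAdv P r γ μ ν s), ← expectedAdv_self (r := r) hγ0 hγ1 hP hμ s]
        simp only [expectedAdv, ← sum_sub_distrib, sub_mul]
    _ ≤ ∑ a, |ν s a - μ s a| * ε := (abs_sum_le_sum_abs _ _).trans <| sum_le_sum fun a _ => by
        rw [abs_mul]; exact mul_le_mul_of_nonneg_left (hε a) (abs_nonneg _)
    _ = ε * ∑ a, |ν s a - μ s a| := by rw [← sum_mul, mul_comm]

theorem Jret_eq_add_tsum_expectedAdv (hγ0 : 0 ≤ γ) (hγ1 : γ < 1)
    (hP : ∀ s a, P s a ∈ stdSimplex ℝ S) (hμ : ∀ s, μ s ∈ stdSimplex ℝ 𝒜)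
    (hν : ∀ s, ν s ∈ stdSimplex ℝ 𝒜) (hd : d ∈ stdSimplex ℝ S) :
    Jret P r γ ν d =
      Jret P r γ μ d + ∑' t, γ ^ t * ∑ s, dseq P ν d t s * expectedAdv P r γ μ ν s := by
  set v : ℕ → ℝ := fun t => γ ^ t * ∑ s, dseq P ν d t s * Vfun P r γ μ s
  have hdist := dseq_mem_stdSimplex hP hν hd
  have hv : Summable v := summable_geometric_mul_sum_mul hγ0 hγ1 hdist _
  have hv0 : v 0 = Jret P r γ μ d := by
    simp only [v, pow_zero, one_mul, Jret_eq_sum_mul_Vfun hγ0 hγ1 hP hμ]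
    rfl
  have htelescope : ∑' t, (v t - v (t + 1)) = v 0 := by
    rw [hv.tsum_sub ((summable_nat_add_iff 1).2 hv), hv.tsum_eq_zero_add, add_sub_cancel_right]
  -- `∑ₐ ν r = Ā + V - γ ∑ₐ ν ∑ P V`, so the value terms telescope along the trajectory of `ν`.
  have hstep (t : ℕ) : γ ^ t * ∑ s, dseq P ν d t s * ∑ a, ν s a * r s a =
      γ ^ t * ∑ s, dseq P ν d t s * expectedAdv P r γ μ ν s + (v t - v (t + 1)) := by
    simp only [v, dseq_succ, sum_nextDist_mul, expectedAdv_eq hν, Qfun, mul_add, sum_add_distrib,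
      mul_sub, sum_sub_distrib, ← mul_sum, mul_left_comm _ γ]
    ring
  rw [Jret_eq_tsum, tsum_congr hstep,
    (summable_geometric_mul_sum_mul hγ0 hγ1 hdist _).tsum_add
      (hv.sub ((summable_nat_add_iff 1).2 hv)), htelescope, hv0, add_comm]

theorem abs_Jret_sub_sub_sum_rho_mul_expectedAdv_le [Nonempty S] [Nonempty 𝒜]
    (hγ0 : 0 ≤ γ) (hγ1 : γ < 1) (hP : ∀ s a, P s a ∈ stdSimplex ℝ S)
    (hμ : ∀ s, μ s ∈ stdSimplex ℝ 𝒜) (hν : ∀ s, ν s ∈ stdSimplex ℝ 𝒜) (hd : d ∈ stdSimplex ℝ S)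
    {ε α : ℝ} (hε : ∀ s a, |Adv P r γ μ s a| ≤ ε) (hα : ∀ s, ∑ a, |ν s a - μ s a| ≤ α) :
    |Jret P r γ ν d - Jret P r γ μ d - ∑ s, rho P μ d γ s * expectedAdv P r γ μ ν s| ≤
      γ * ε * α ^ 2 / (1 - γ) ^ 2 := by
  have hε0 : 0 ≤ ε := (abs_nonneg _).trans (hε (Classical.arbitrary S) (Classical.arbitrary 𝒜))
  have hα0 : 0 ≤ α := (sum_nonneg fun a _ => abs_nonneg _).trans (hα (Classical.arbitrary S))
  have hA (s : S) : |expectedAdv P r γ μ ν s| ≤ ε * α :=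
    (abs_expectedAdv_le hγ0 hγ1 hP hμ (hε s)).trans (mul_le_mul_of_nonneg_left (hα s) hε0)
  have hnorm : ‖γ‖ < 1 := by rwa [Real.norm_of_nonneg hγ0]
  rw [Jret_eq_add_tsum_expectedAdv hγ0 hγ1 hP hμ hν hd, sum_rho_mul hγ0 hγ1 hP hμ hd,
    add_sub_cancel_left,
    ← (summable_geometric_mul_sum_mul hγ0 hγ1 (dseq_mem_stdSimplex hP hν hd) _).tsum_sub
      (summable_geometric_mul_sum_mul hγ0 hγ1 (dseq_mem_stdSimplex hP hμ hd) _)]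
  have hterm (t : ℕ) : ‖γ ^ t * ∑ s, dseq P ν d t s * expectedAdv P r γ μ ν s -
      γ ^ t * ∑ s, dseq P μ d t s * expectedAdv P r γ μ ν s‖ ≤ ε * α ^ 2 * (t * γ ^ t) := by
    have hdrift : |∑ s, (dseq P ν d t s - dseq P μ d t s) * expectedAdv P r γ μ ν s| ≤
        (α * t) * (ε * α) := by
      calc _ ≤ ∑ s, |dseq P ν d t s - dseq P μ d t s| * (ε * α) :=
            (abs_sum_le_sum_abs _ _).trans <| sum_le_sum fun s _ =>
              (abs_mul _ _).trans_le (mul_le_mul_of_nonneg_left (hA s) (abs_nonneg _))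
        _ ≤ (α * t) * (ε * α) := by
            rw [← sum_mul]
            exact mul_le_mul_of_nonneg_right (sum_abs_dseq_sub_le hP hμ hν hd hα t)
              (mul_nonneg hε0 hα0)
    rw [Real.norm_eq_abs, ← mul_sub, ← sum_sub_distrib, abs_mul, abs_of_nonneg (pow_nonneg hγ0 t)]
    simp only [← sub_mul]
    calc γ ^ t * |∑ s, (dseq P ν d t s - dseq P μ d t s) * expectedAdv P r γ μ ν s|
        ≤ γ ^ t * ((α * t) * (ε * α)) := by gcongr
      _ = ε * α ^ 2 * (t * γ ^ t) := by ring
  rw [← Real.norm_eq_abs]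
  calc _ ≤ ε * α ^ 2 * (γ / (1 - γ) ^ 2) :=
        tsum_of_norm_bounded ((hasSum_coe_mul_geometric_of_norm_lt_one hnorm).mul_left _) hterm
    _ = γ * ε * α ^ 2 / (1 - γ) ^ 2 := by ring

theorem Jret_add_sum_rho_mul_sub_le [Nonempty S] [Nonempty 𝒜]
    (hγ0 : 0 ≤ γ) (hγ1 : γ < 1) (hP : ∀ s a, P s a ∈ stdSimplex ℝ S)
    (hμ : ∀ s a, 0 < μ s a) (hμ1 : ∀ s, ∑ a, μ s a = 1)
    (hν : ∀ s a, 0 < ν s a) (hν1 : ∀ s, ∑ a, ν s a = 1) (hd : d ∈ stdSimplex ℝ S)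
    {ε κ : ℝ} (hε : ∀ s a, |Adv P r γ μ s a| ≤ ε) (hκ : ∀ s, KL (μ s) (ν s) ≤ κ) :
    Jret P r γ μ d + ∑ s, rho P μ d γ s *
      (expectedAdv P r γ μ ν s - 4 * γ * ε / (1 - γ) ^ 2 * κ) ≤ Jret P r γ ν d := by
  have hμs (s : S) : μ s ∈ stdSimplex ℝ 𝒜 := ⟨fun a => (hμ s a).le, hμ1 s⟩
  have hpinsker (s : S) : (∑ a, |ν s a - μ s a|) ^ 2 ≤ 4 * κ := by
    simp_rw [abs_sub_comm (ν s _)]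
    exact (sq_sum_abs_sub_le_four_mul_KL (hμ s) (hν s) (hμ1 s) (hν1 s)).trans (by linarith [hκ s])
  have hκ0 : 0 ≤ 4 * κ := (sq_nonneg _).trans (hpinsker (Classical.arbitrary S))
  have hε0 : 0 ≤ ε := (abs_nonneg _).trans (hε (Classical.arbitrary S) (Classical.arbitrary 𝒜))
  have h := abs_Jret_sub_sub_sum_rho_mul_expectedAdv_le (r := r) hγ0 hγ1 hP hμs
    (fun s => ⟨fun a => (hν s a).le, hν1 s⟩) hd hε fun s => Real.le_sqrt_of_sq_le (hpinsker s)
  rw [Real.sq_sqrt hκ0] at h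
  have hpenalty : 4 * γ * ε / (1 - γ) ^ 2 * κ ≤ 4 * γ * ε / (1 - γ) ^ 2 * κ * (1 - γ)⁻¹ :=
    le_mul_of_one_le_right (mul_nonneg (by positivity) (by linarith))
      ((one_le_inv₀ (sub_pos.2 hγ1)).2 (by linarith))
  simp only [mul_sub, sum_sub_distrib, ← sum_mul, sum_rho hγ0 hγ1 hP hμs hd]
  linarith [(abs_le.1 h).1,
    show γ * ε * (4 * κ) / (1 - γ) ^ 2 = 4 * γ * ε / (1 - γ) ^ 2 * κ by ring]

end PolicyImprovement

theorem expectedAdv_mixture_eq [Fintype S] [Fintype 𝒜] [DecidableEq S] {P : S → 𝒜 → S → ℝ}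
    {r : S → 𝒜 → ℝ} {γ : ℝ} {μ : S → 𝒜 → ℝ} {K : ℕ} {wb : S → Fin K → ℝ}
    {π πb : Fin K → S → 𝒜 → ℝ} (hwb1 : ∀ s, ∑ j, wb s j = 1) (hπb1 : ∀ j s, ∑ a, πb j s a = 1)
    (s : S) :
    expectedAdv P r γ μ (fun s a => ∑ j, wb s j * πb j s a) s =
      ∑ j, wb s j * ((∑ a, π j s a * Qfun P r γ μ s a) - Vfun P r γ μ s) +
        ∑ j, wb s j * ∑ a, πb j s a * (Qfun P r γ μ s a - ∑ a', π j s a' * Qfun P r γ μ s a') := by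
  have hswap : ∑ a, (∑ j, wb s j * πb j s a) * Qfun P r γ μ s a =
      ∑ j, wb s j * ∑ a, πb j s a * Qfun P r γ μ s a := by
    simp only [sum_mul, mul_sum, mul_assoc]
    exact sum_comm
  simp only [expectedAdv, Adv, mul_sub, sum_sub_distrib, ← sum_mul,
    sum_mixture_eq_one (hwb1 s) (hπb1 · s), one_mul, hswap, hwb1, hπb1]
  ring

/-- (Conductor-based policy improvement inequality, Theorem 1 of HCPO.)
For conductor-based policies `(w, π)` and `(wb, πb)` with induced joint
policies `μ` and `μb`, the return of `μb` is lower-bounded by the return of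
`μ` plus the discounted-visitation-weighted sum of the conductor advantage
and the conditional action advantage, penalized by the maximal KL divergences
of the conductor policies and of the instruction-conditional policies. -/
theorem conductor_policy_improvement
    [Fintype S] [Fintype 𝒜] [Nonempty S] [Nonempty 𝒜] [DecidableEq S]
    (P : S → 𝒜 → S → ℝ) (r : S → 𝒜 → ℝ) (γ : ℝ)
    (hγ0 : 0 ≤ γ) (hγ1 : γ < 1)
    (hP0 : ∀ s a s', 0 ≤ P s a s') (hP1 : ∀ s a, ∑ s', P s a s' = 1)
    (d₀ : S → ℝ) (hd0 : ∀ s, 0 ≤ d₀ s) (hd1 : ∑ s, d₀ s = 1)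
    (K : ℕ) (hK : 1 ≤ K)
    (w wb : S → Fin K → ℝ) (π πb : Fin K → S → 𝒜 → ℝ)
    (hw : ∀ s j, 0 < w s j) (hw1 : ∀ s, ∑ j, w s j = 1)
    (hwb : ∀ s j, 0 < wb s j) (hwb1 : ∀ s, ∑ j, wb s j = 1)
    (hπ : ∀ j s a, 0 < π j s a) (hπ1 : ∀ j s, ∑ a, π j s a = 1)
    (hπb : ∀ j s a, 0 < πb j s a) (hπb1 : ∀ j s, ∑ a, πb j s a = 1)
    (μ μb : S → 𝒜 → ℝ)
    (hμ : μ = fun s a => ∑ j, w s j * π j s a)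
    (hμb : μb = fun s a => ∑ j, wb s j * πb j s a)
    (C : ℝ)
    (hC : C = 4 * γ * (Finset.univ.sup' Finset.univ_nonempty
        fun p : S × 𝒜 => |Adv P r γ μ p.1 p.2|) / (1 - γ) ^ 2) :
    Jret P r γ μb d₀ ≥ Jret P r γ μ d₀ +
      ∑ s, rho P μ d₀ γ s *
        ((∑ j, wb s j *
            ((∑ a, π j s a * Qfun P r γ μ s a) - Vfun P r γ μ s))
          - C * (Finset.univ.sup' Finset.univ_nonempty
              fun s' => KL (w s') (wb s'))
          + (∑ j, wb s j * ∑ a, πb j s a *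
              (Qfun P r γ μ s a - ∑ a', π j s a' * Qfun P r γ μ s a'))
          - C * (Finset.univ.sup' Finset.univ_nonempty
              fun s' => ∑ j, w s' j * KL (π j s') (πb j s'))) := by
  have : Nonempty (Fin K) := ⟨⟨0, hK⟩⟩
  have hμpos (s : S) (a : 𝒜) : 0 < μ s a :=
    hμ ▸ sum_pos (fun j _ => mul_pos (hw s j) (hπ j s a)) univ_nonempty
  have hμbpos (s : S) (a : 𝒜) : 0 < μb s a :=
    hμb ▸ sum_pos (fun j _ => mul_pos (hwb s j) (hπb j s a)) univ_nonempty
  have hμ1 (s : S) : ∑ a, μ s a = 1 := hμ ▸ sum_mixture_eq_one (hw1 s) (hπ1 · s)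
  have hμb1 (s : S) : ∑ a, μb s a = 1 := hμb ▸ sum_mixture_eq_one (hwb1 s) (hπb1 · s)
  have hKL (s : S) : KL (μ s) (μb s) ≤ (univ.sup' univ_nonempty fun s' => KL (w s') (wb s')) +
      univ.sup' univ_nonempty fun s' => ∑ j, w s' j * KL (π j s') (πb j s') := by
    rw [hμ, hμb]
    exact (KL_mixture_le (hw s) (hwb s) (hπ · s) (hπb · s) (hπ1 · s)).trans
      (add_le_add (le_sup' (fun s' => KL (w s') (wb s')) (mem_univ s))
        (le_sup' (fun s' => ∑ j, w s' j * KL (π j s') (πb j s')) (mem_univ s)))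
  have hε (s : S) (a : 𝒜) :
      |Adv P r γ μ s a| ≤ univ.sup' univ_nonempty fun p : S × 𝒜 => |Adv P r γ μ p.1 p.2| :=
    le_sup' (fun p : S × 𝒜 => |Adv P r γ μ p.1 p.2|) (mem_univ (s, a))
  refine le_of_eq_of_le ?_ (Jret_add_sum_rho_mul_sub_le hγ0 hγ1 (fun s a => ⟨hP0 s a, hP1 s a⟩)
    hμpos hμ1 hμbpos hμb1 ⟨hd0, hd1⟩ hε hKL)
  refine congrArg _ (sum_congr rfl fun s _ => ?_)
  rw [← hC, hμb, expectedAdv_mixture_eq hwb1 hπb1]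
  ring

end
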